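/- arXiv:2106.07859 — 2 statements merged into one kernel-verified Lean document; each statement's English description precedes it below -/
import Mathlib

section
/- (Equality case of the verification theorem: optimality of the Hamiltonian-minimizing feedback.) Let Z : [0,T] → ℝ be continuous, let u : [0,T]×E → ℝ be continuously differentiable in t and solve the HJB equation u̇(t,e) + Ĥ(t,e,Z_t,u(t,·)) = 0 with u(T,e) = g(e, Z_T), and suppose the feedback σ̂(t,e) := â_e(t, Z_t, u(t,·)) is continuous in t for each e. Let p : [0,T] → ℝ^E be continuously differentiable with ṗ(t,e) = Σ_{e'∈E} q_{e',e}(σ̂(t,e'), Z_t) p(t,e') and p(0) = p₀ a probability vector. Then Σ_{e∈E} p₀(e) u(0,e) = ∫₀^T Σ_{e∈E} p(t,e) f(t,e,Z_t,σ̂(t,e)) dt + Σ_{e∈E} p(T,e) g(e, Z_T). -/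
/-!
Along the forward Kolmogorov flow `ṗ = p Q(σ̂)` of the feedback `σ̂`, the pairing `⟨p(t), u(t)⟩`
has derivative `⟨p Q, u⟩ + ⟨p, u̇⟩ = ⟨p, Q u + u̇⟩`, and by the HJB equation, whose minimum is
attained at `σ̂`, `Q u + u̇ = -f(σ̂)`. Integrating over `[0, T]` gives the identity.
-/

open Set Matrix

theorem HasDerivWithinAt.dotProduct {ι : Type*} [Fintype ι] {p u : ℝ → ι → ℝ} {p' u' : ι → ℝ}
    {s : Set ℝ} {t : ℝ}
    (hp : ∀ i, HasDerivWithinAt (fun r => p r i) (p' i) s t)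
    (hu : ∀ i, HasDerivWithinAt (fun r => u r i) (u' i) s t) :
    HasDerivWithinAt (fun r => p r ⬝ᵥ u r) (p' ⬝ᵥ u t + p t ⬝ᵥ u') s t := by
  unfold _root_.dotProduct
  rw [← Finset.sum_add_distrib]
  exact HasDerivWithinAt.fun_sum fun i _ => (hp i).mul (hu i)

theorem vecMul_dotProduct_add_dotProduct_neg {ι : Type*} [Fintype ι] (M : Matrix ι ι ℝ)
    (p u c : ι → ℝ) : (p ᵥ* M) ⬝ᵥ u + p ⬝ᵥ -(M *ᵥ u + c) = -(p ⬝ᵥ c) := by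
  rw [dotProduct_neg, dotProduct_add, dotProduct_mulVec]
  ring

theorem dotProduct_eq_integral_add_of_kolmogorov {ι : Type*} [Fintype ι] {a b : ℝ} (hab : a ≤ b)
    {M : ℝ → Matrix ι ι ℝ} {c p u u' : ℝ → ι → ℝ}
    (hp : ∀ t ∈ Icc a b, ∀ i, HasDerivWithinAt (fun s => p s i) ((p t ᵥ* M t) i) (Icc a b) t)
    (hu : ∀ t ∈ Icc a b, ∀ i, HasDerivWithinAt (fun s => u s i) (u' t i) (Icc a b) t)
    (hu' : ∀ t ∈ Icc a b, u' t = -(M t *ᵥ u t + c t))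
    (hc : ∀ i, ContinuousOn (fun t => c t i) (Icc a b)) :
    p a ⬝ᵥ u a = (∫ t in a..b, p t ⬝ᵥ c t) + p b ⬝ᵥ u b := by
  have hderiv : ∀ t ∈ Icc a b,
      HasDerivWithinAt (fun s => p s ⬝ᵥ u s) (-(p t ⬝ᵥ c t)) (Icc a b) t := by
    intro t ht
    rw [← vecMul_dotProduct_add_dotProduct_neg (M t), ← hu' t ht]
    exact .dotProduct (hp t ht) (hu t ht)
  have hpc : ∀ i, ContinuousOn (fun t => p t i) (Icc a b) :=
    fun i t ht => (hp t ht i).continuousWithinAt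
  have hintegrand : ContinuousOn (fun t => -(p t ⬝ᵥ c t)) (Icc a b) :=
    (continuousOn_finsetSum _ fun i _ => (hpc i).mul (hc i)).neg
  have hftc : ∫ t in a..b, -(p t ⬝ᵥ c t) = p b ⬝ᵥ u b - p a ⬝ᵥ u a := by
    refine intervalIntegral.integral_eq_sub_of_hasDeriv_right_of_le hab
      (fun t ht => (hderiv t ht).continuousWithinAt)
      (fun t ht => ((hderiv t (Ioo_subset_Icc_self ht)).hasDerivAt
        (Icc_mem_nhds ht.1 ht.2)).hasDerivWithinAt) ?_
    exact hintegrand.intervalIntegrable_of_Icc hab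
  rw [intervalIntegral.integral_neg] at hftc
  linarith

theorem stmt_3_general (n : ℕ) (T : ℝ) (hT : 0 < T)
    (q : Fin n → Fin n → ℝ → ℝ → ℝ)
    (f : ℝ → Fin n → ℝ → ℝ → ℝ)
    (hfcont : ∀ e, Continuous fun v : ℝ × ℝ × ℝ => f v.1 e v.2.1 v.2.2)
    (g : Fin n → ℝ → ℝ)
    -- `ahat t e z h` is the (unique) minimizer over `A` of the Hamiltonian
    (ahat : ℝ → Fin n → ℝ → (Fin n → ℝ) → ℝ)
    -- the minimized Hamiltonian
    (Hhat : ℝ → Fin n → ℝ → (Fin n → ℝ) → ℝ)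
    (hHhatdef : ∀ (t : ℝ) (e : Fin n) (z : ℝ) (h : Fin n → ℝ),
      Hhat t e z h = (∑ e', q e e' (ahat t e z h) z * h e') + f t e z (ahat t e z h))
    (Z : ℝ → ℝ) (hZ : ContinuousOn Z (Icc 0 T))
    (u u' : ℝ → Fin n → ℝ)
    (hu : ∀ t ∈ Icc (0:ℝ) T, ∀ e, HasDerivWithinAt (fun s => u s e) (u' t e) (Icc 0 T) t)
    (hHJB : ∀ t ∈ Icc (0:ℝ) T, ∀ e, u' t e + Hhat t e (Z t) (u t) = 0)
    (huT : ∀ e, u T e = g e (Z T))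
    -- the feedback `σ̂(t,e) = â_e(t,Z_t,u(t,·))` is continuous in time
    (hσcont : ∀ e, ContinuousOn (fun t => ahat t e (Z t) (u t)) (Icc 0 T))
    (p : ℝ → Fin n → ℝ)
    (hp : ∀ t ∈ Icc (0:ℝ) T, ∀ e, HasDerivWithinAt (fun s => p s e)
      (∑ e', q e' e (ahat t e' (Z t) (u t)) (Z t) * p t e') (Icc 0 T) t) :
    ∑ e, p 0 e * u 0 e =
      (∫ t in (0:ℝ)..T, ∑ e, p t e * f t e (Z t) (ahat t e (Z t) (u t)))
        + ∑ e, p T e * g e (Z T) := by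
  let M : ℝ → Matrix (Fin n) (Fin n) ℝ := fun t => Matrix.of fun i j =>
    q i j (ahat t i (Z t) (u t)) (Z t)
  have hpM : ∀ t ∈ Icc (0:ℝ) T, ∀ e,
      HasDerivWithinAt (fun s => p s e) ((p t ᵥ* M t) e) (Icc 0 T) t := by
    intro t ht e
    simpa only [vecMul, dotProduct, M, Matrix.of_apply, mul_comm] using hp t ht e
  have hu' : ∀ t ∈ Icc (0:ℝ) T,
      u' t = -(M t *ᵥ u t + fun e => f t e (Z t) (ahat t e (Z t) (u t))) := by
    intro t ht
    funext e
    have hHJBte := hHJB t ht e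
    rw [hHhatdef] at hHJBte
    simp only [Pi.neg_apply, Pi.add_apply, mulVec, dotProduct, M, Matrix.of_apply]
    linarith
  have hc : ∀ e, ContinuousOn (fun t => f t e (Z t) (ahat t e (Z t) (u t))) (Icc 0 T) :=
    fun e => (hfcont e).comp_continuousOn (continuousOn_id.prodMk (hZ.prodMk (hσcont e)))
  simpa only [dotProduct, huT] using
    dotProduct_eq_integral_add_of_kolmogorov hT.le hpM hu hu' hc

/-- Equality case of the verification theorem (optimality of the Hamiltonian-minimizing
feedback): with `σ̂(t,e) := â_e(t,Z_t,u(t,·))` the minimizer of the Hamiltonian,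
`Σ_e p₀(e)u(0,e) = ∫₀^T Σ_e p(t,e) f(t,e,Z_t,σ̂(t,e)) dt + Σ_e p(T,e) g(e,Z_T)`. -/
theorem stmt_3 (n : ℕ) (hn : 2 ≤ n) (T : ℝ) (hT : 0 < T)
    (A : Set ℝ) (hA : IsCompact A) (hAne : A.Nonempty)
    (q : Fin n → Fin n → ℝ → ℝ → ℝ)
    (hQmat : ∀ a ∈ A, ∀ z : ℝ, (∀ i j, i ≠ j → 0 ≤ q i j a z) ∧ ∀ i, ∑ j, q i j a z = 0)
    (hqcont : ∀ i j, Continuous fun v : ℝ × ℝ => q i j v.1 v.2)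
    (f : ℝ → Fin n → ℝ → ℝ → ℝ)
    (hfcont : ∀ e, Continuous fun v : ℝ × ℝ × ℝ => f v.1 e v.2.1 v.2.2)
    (g : Fin n → ℝ → ℝ)
    -- `ahat t e z h` is the (unique) minimizer over `A` of the Hamiltonian
    (ahat : ℝ → Fin n → ℝ → (Fin n → ℝ) → ℝ)
    (hahat : ∀ (t : ℝ) (e : Fin n) (z : ℝ) (h : Fin n → ℝ), ahat t e z h ∈ A ∧
      ∀ b ∈ A, (∑ e', q e e' (ahat t e z h) z * h e') + f t e z (ahat t e z h) ≤
        (∑ e', q e e' b z * h e') + f t e z b)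
    -- the minimized Hamiltonian
    (Hhat : ℝ → Fin n → ℝ → (Fin n → ℝ) → ℝ)
    (hHhatdef : ∀ (t : ℝ) (e : Fin n) (z : ℝ) (h : Fin n → ℝ),
      Hhat t e z h = (∑ e', q e e' (ahat t e z h) z * h e') + f t e z (ahat t e z h))
    (hHhatcont : ∀ e, Continuous fun v : ℝ × ℝ × (Fin n → ℝ) => Hhat v.1 e v.2.1 v.2.2)
    (Z : ℝ → ℝ) (hZ : ContinuousOn Z (Icc 0 T))
    (u u' : ℝ → Fin n → ℝ)
    (hu : ∀ t ∈ Icc (0:ℝ) T, ∀ e, HasDerivWithinAt (fun s => u s e) (u' t e) (Icc 0 T) t)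
    (hu'c : ∀ e, ContinuousOn (fun t => u' t e) (Icc 0 T))
    (hHJB : ∀ t ∈ Icc (0:ℝ) T, ∀ e, u' t e + Hhat t e (Z t) (u t) = 0)
    (huT : ∀ e, u T e = g e (Z T))
    -- the feedback `σ̂(t,e) = â_e(t,Z_t,u(t,·))` is continuous in time
    (hσcont : ∀ e, ContinuousOn (fun t => ahat t e (Z t) (u t)) (Icc 0 T))
    (p : ℝ → Fin n → ℝ)
    (hp : ∀ t ∈ Icc (0:ℝ) T, ∀ e, HasDerivWithinAt (fun s => p s e)
      (∑ e', q e' e (ahat t e' (Z t) (u t)) (Z t) * p t e') (Icc 0 T) t)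
    (hp0pos : ∀ e, 0 ≤ p 0 e) (hp0sum : ∑ e, p 0 e = 1) :
    ∑ e, p 0 e * u 0 e =
      (∫ t in (0:ℝ)..T, ∑ e, p t e * f t e (Z t) (ahat t e (Z t) (u t)))
        + ∑ e, p T e * g e (Z T) :=
  stmt_3_general n T hT q f hfcont g ahat Hhat hHhatdef Z hZ u u' hu hHJB huT hσcont p hp
end

section
/- (The Kolmogorov forward equation preserves the probability simplex.) Let Q : [0,T] → ℝ^{n×n} be continuous and such that Q(t) is a Q-matrix for every t ∈ [0,T] (nonnegative off-diagonal entries, each row summing to zero). If p : [0,T] → ℝ^n is differentiable and satisfies ṗ(t,e) = Σ_{e'=1}^n Q(t)_{e',e} p(t,e') for all t and e, and p(0) is a probability vector (nonnegative entries summing to 1), then p(t) is a probability vector for every t ∈ [0,T]. -/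
/-!
The total mass `∑ₑ p(t,e)` has derivative `∑_{e'} (∑ₑ Q(t)_{e',e}) p(t,e') = 0`, so it stays `1`.
For nonnegativity, consider the total negative part `g(t) = ∑ₑ p(t,e)⁻`, which vanishes at `0`.
If `p(t,e) ≤ 0`, then every term of `-ṗ(t,e)` is at most `Q(t)_{e',e} p(t,e')⁻` (off the
diagonal because `Q(t)_{e',e} ≥ 0`), hence `-ṗ(t,e) ≤ C g(t)` for a uniform upper bound `C` of
the entries of `Q`. So the upper right Dini derivative of `g` is at most a multiple of `g`, and
Grönwall's inequality forces `g = 0`.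
-/

open Set Filter Topology

theorem exists_forall_le_of_continuousOn {X ι κ : Type*} [TopologicalSpace X] [Fintype ι]
    [Fintype κ] {s : Set X} (hs : IsCompact s) {Q : X → ι → κ → ℝ}
    (hQ : ∀ i j, ContinuousOn (fun t => Q t i j) s) :
    ∃ C, 0 ≤ C ∧ ∀ t ∈ s, ∀ i j, Q t i j ≤ C := by
  obtain ⟨C, hC⟩ :=
    hs.exists_bound_of_continuousOn (continuousOn_pi.2 fun i => continuousOn_pi.2 (hQ i))
  refine ⟨max C 0, le_max_right _ _, fun t ht i j => ?_⟩
  calc Q t i j ≤ ‖Q t i j‖ := le_abs_self _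
    _ ≤ ‖Q t‖ := (norm_le_pi_norm (Q t i) j).trans (norm_le_pi_norm (Q t) i)
    _ ≤ max C 0 := (hC t ht).trans (le_max_left _ _)

theorem neg_sum_mul_le_mul_sum_negPart {ι : Type*} [Fintype ι] {q v : ι → ℝ} {i : ι} {C : ℝ}
    (hq : ∀ j, j ≠ i → 0 ≤ q j) (hqC : ∀ j, q j ≤ C) (hv : v i ≤ 0) :
    -∑ j, q j * v j ≤ C * ∑ j, (v j)⁻ := by
  rw [← Finset.sum_neg_distrib, Finset.mul_sum]
  refine Finset.sum_le_sum fun j _ => ?_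
  calc -(q j * v j) ≤ q j * (v j)⁻ := by
        rcases eq_or_ne j i with rfl | hj
        · rw [negPart_eq_neg.2 hv, mul_neg]
        · simpa only [mul_neg] using mul_le_mul_of_nonneg_left (neg_le_negPart (v j)) (hq j hj)
    _ ≤ C * (v j)⁻ := mul_le_mul_of_nonneg_right (hqC j) (negPart_nonneg _)

theorem eventually_slope_negPart_lt {f : ℝ → ℝ} {f' x r : ℝ}
    (hf : HasDerivWithinAt f f' (Ici x) x) (hr : 0 < r) (hneg : f x ≤ 0 → -f' < r) :
    ∀ᶠ z in 𝓝[>] x, slope (fun t => (f t)⁻) x z < r := by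
  rcases le_or_gt (f x) 0 with hfx | hfx
  · have hslope : Tendsto (slope f x) (𝓝[>] x) (𝓝 f') :=
      (hasDerivWithinAt_iff_tendsto_slope' self_notMem_Ioi).1 hf.Ioi_of_Ici
    filter_upwards [hslope.eventually_const_lt (neg_lt.1 (hneg hfx)), self_mem_nhdsWithin]
      with z hz (hxz : x < z)
    have hd : 0 < z - x := sub_pos.2 hxz
    rw [slope_def_field, lt_div_iff₀ hd] at hz
    rw [slope_def_field, div_lt_iff₀ hd, negPart_eq_neg.2 hfx, negPart_def]
    rw [sub_neg_eq_add, ← lt_sub_iff_add_lt]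
    exact sup_lt_iff.2 ⟨by linarith, by nlinarith⟩
  · filter_upwards [(hf.continuousWithinAt.mono Ioi_subset_Ici_self).eventually_const_lt hfx]
      with z hz
    simp [slope_def_field, negPart_eq_zero.2 hz.le, negPart_eq_zero.2 hfx.le, hr]

/-- The factor `card ι + 1` (rather than `card ι`) makes the componentwise bounds
`r / (card ι + 1)` sum to strictly less than `r`. -/
theorem eventually_slope_sum_negPart_lt {ι : Type*} [Fintype ι] {p : ℝ → ι → ℝ}
    {q : ι → ι → ℝ} {x C r : ℝ}
    (hp : ∀ e, HasDerivWithinAt (fun t => p t e) (∑ e', q e' e * p x e') (Ici x) x)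
    (hq : ∀ i j, i ≠ j → 0 ≤ q i j) (hqC : ∀ i j, q i j ≤ C) (hC : 0 ≤ C)
    (hr : (Fintype.card ι + 1) * C * ∑ e, (p x e)⁻ < r) :
    ∀ᶠ z in 𝓝[>] x, slope (fun t => ∑ e, (p t e)⁻) x z < r := by
  set m : ℝ := Fintype.card ι + 1
  set g : ℝ := ∑ e, (p x e)⁻
  have hm : 0 < m := by positivity
  have hr0 : 0 < r :=
    hr.trans_le' (mul_nonneg (mul_nonneg hm.le hC) (Finset.sum_nonneg fun e _ => negPart_nonneg _))
  have hCg : C * g < r / m := by rw [lt_div_iff₀' hm, ← mul_assoc]; exact hr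
  have hcomp : ∀ e, ∀ᶠ z in 𝓝[>] x, slope (fun t => (p t e)⁻) x z < r / m := fun e =>
    eventually_slope_negPart_lt (hp e) (div_pos hr0 hm) fun hpe =>
      (neg_sum_mul_le_mul_sum_negPart (fun j hj => hq j e hj) (fun j => hqC j e) hpe).trans_lt hCg
  filter_upwards [eventually_all.2 hcomp] with z hz
  calc slope (fun t => ∑ e, (p t e)⁻) x z = ∑ e, slope (fun t => (p t e)⁻) x z := by
        simp only [slope_def_module, ← Finset.sum_sub_distrib, Finset.smul_sum]
    _ ≤ ∑ _e : ι, r / m := Finset.sum_le_sum fun e _ => (hz e).le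
    _ = r - r / m := by
        rw [Finset.sum_const, Finset.card_univ, nsmul_eq_mul]
        field_simp
        ring
    _ < r := sub_lt_self r (div_pos hr0 hm)

section ForwardEquation

variable {ι : Type*} [Fintype ι] {Q : ℝ → ι → ι → ℝ} {p : ℝ → ι → ℝ} {a b : ℝ}

theorem sum_eq_of_forward_equation (hQrow : ∀ t ∈ Icc a b, ∀ i, ∑ j, Q t i j = 0)
    (hp : ∀ t ∈ Icc a b, ∀ e,
      HasDerivWithinAt (fun s => p s e) (∑ e', Q t e' e * p t e') (Icc a b) t) :
    ∀ t ∈ Icc a b, ∑ e, p t e = ∑ e, p a e := by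
  have hderiv : ∀ t ∈ Icc a b, HasDerivWithinAt (fun s => ∑ e, p s e) 0 (Icc a b) t := by
    intro t ht
    refine (HasDerivWithinAt.fun_sum fun e _ => hp t ht e).congr_deriv ?_
    rw [Finset.sum_comm]
    simp only [← Finset.sum_mul, hQrow t ht, zero_mul, Finset.sum_const_zero]
  exact constant_of_has_deriv_right_zero (fun t ht => (hderiv t ht).continuousWithinAt)
    fun t ht =>
      (hderiv t (Ico_subset_Icc_self ht)).mono_of_mem_nhdsWithin (Icc_mem_nhdsGE_of_mem ht)

theorem nonneg_of_forward_equation (hQcont : ∀ i j, ContinuousOn (fun t => Q t i j) (Icc a b))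
    (hQoff : ∀ t ∈ Icc a b, ∀ i j, i ≠ j → 0 ≤ Q t i j)
    (hp : ∀ t ∈ Icc a b, ∀ e,
      HasDerivWithinAt (fun s => p s e) (∑ e', Q t e' e * p t e') (Icc a b) t)
    (hpa : ∀ e, 0 ≤ p a e) :
    ∀ t ∈ Icc a b, ∀ e, 0 ≤ p t e := by
  obtain ⟨C, hC, hQC⟩ := exists_forall_le_of_continuousOn isCompact_Icc hQcont
  set g : ℝ → ℝ := fun t => ∑ e, (p t e)⁻
  have hg_cont : ContinuousOn g (Icc a b) := continuousOn_finsetSum _ fun e _ =>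
    continuous_negPart.comp_continuousOn fun t ht => (hp t ht e).continuousWithinAt
  have hga : g a = 0 := Finset.sum_eq_zero fun e _ => negPart_eq_zero.2 (hpa e)
  have hg_slope : ∀ x ∈ Ico a b, ∀ r, (Fintype.card ι + 1) * C * g x < r →
      ∃ᶠ z in 𝓝[>] x, (z - x)⁻¹ * (g z - g x) < r := fun x hx r hr =>
    have hx' := Ico_subset_Icc_self hx
    (eventually_slope_sum_negPart_lt
      (fun e => (hp x hx' e).mono_of_mem_nhdsWithin (Icc_mem_nhdsGE_of_mem hx))
      (hQoff x hx') (hQC x hx') hC hr).frequently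
  intro t ht e
  have hgt : g t ≤ 0 := by
    simpa only [gronwallBound_ε0_δ0] using le_gronwallBound_of_liminf_deriv_right_le hg_cont
      hg_slope hga.le (fun x _ => (add_zero _).ge) t ht
  have hg0 := (Fintype.sum_eq_zero_iff_of_nonneg fun e => negPart_nonneg (p t e)).1
    (hgt.antisymm (Finset.sum_nonneg fun e _ => negPart_nonneg _))
  exact negPart_eq_zero.1 (congrFun hg0 e)

end ForwardEquation

theorem stmt_10_general (n : ℕ) (T : ℝ)
    (Q : ℝ → Fin n → Fin n → ℝ)
    (hQcont : ∀ i j, ContinuousOn (fun t => Q t i j) (Icc 0 T))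
    (hQoff : ∀ t ∈ Icc (0:ℝ) T, ∀ i j, i ≠ j → 0 ≤ Q t i j)
    (hQrow : ∀ t ∈ Icc (0:ℝ) T, ∀ i, ∑ j, Q t i j = 0)
    (p : ℝ → Fin n → ℝ)
    (hp : ∀ t ∈ Icc (0:ℝ) T, ∀ e,
      HasDerivWithinAt (fun s => p s e) (∑ e', Q t e' e * p t e') (Icc 0 T) t)
    (hp0pos : ∀ e, 0 ≤ p 0 e) (hp0sum : ∑ e, p 0 e = 1) :
    ∀ t ∈ Icc (0:ℝ) T, (∀ e, 0 ≤ p t e) ∧ ∑ e, p t e = 1 := fun t ht =>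
  ⟨nonneg_of_forward_equation hQcont hQoff hp hp0pos t ht,
    (sum_eq_of_forward_equation hQrow hp t ht).trans hp0sum⟩

/-- The Kolmogorov forward equation preserves the probability simplex: if `Q(t)` is a
continuous family of Q-matrices on `{1,…,n}` and `ṗ(t,e) = Σ_{e'} Q(t)_{e',e} p(t,e')`
with `p(0)` a probability vector, then `p(t)` is a probability vector for all `t ∈ [0,T]`. -/
theorem stmt_10 (n : ℕ) (hn : 2 ≤ n) (T : ℝ) (hT : 0 < T)
    (Q : ℝ → Fin n → Fin n → ℝ)
    (hQcont : ∀ i j, ContinuousOn (fun t => Q t i j) (Icc 0 T))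
    (hQoff : ∀ t ∈ Icc (0:ℝ) T, ∀ i j, i ≠ j → 0 ≤ Q t i j)
    (hQrow : ∀ t ∈ Icc (0:ℝ) T, ∀ i, ∑ j, Q t i j = 0)
    (p : ℝ → Fin n → ℝ)
    (hp : ∀ t ∈ Icc (0:ℝ) T, ∀ e,
      HasDerivWithinAt (fun s => p s e) (∑ e', Q t e' e * p t e') (Icc 0 T) t)
    (hp0pos : ∀ e, 0 ≤ p 0 e) (hp0sum : ∑ e, p 0 e = 1) :
    ∀ t ∈ Icc (0:ℝ) T, (∀ e, 0 ≤ p t e) ∧ ∑ e, p t e = 1 :=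
  stmt_10_general n T Q hQcont hQoff hQrow p hp hp0pos hp0sum
end
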